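/- arXiv:1008.2194 — 3 statements merged into one kernel-verified Lean document; each statement's English description precedes it below -/
import Mathlib

section
/- The polynomial EC_3(z_1, z_2, z_3; q, t, r) is symmetric in z_1, z_2, z_3: for every permutation π of {1,2,3}, EC_3(z_{π(1)}, z_{π(2)}, z_{π(3)}; q, t, r) = EC_3(z_1, z_2, z_3; q, t, r). -/
/-- `EC₃(z₁, z₂, z₃; q, t, r)` as the sum over the five set partitions of `{1,2,3}`. -/
def EC3 {K : Type*} [Field K] (q t r z₁ z₂ z₃ : K) : K :=
  6 * 1 * (-q + t * z₁) * (-q + t * z₂ - r * (z₁ - z₂))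
      * (-q + t * z₃ - r * (z₁ - z₃ + (z₂ - z₃)))
  + 6 * ((r * (z₁ - z₂) - 1) / 2) * (-(2 : K) * q + t * (z₁ + z₂))
      * (-q + t * z₃ - r * (z₁ + z₂ - 2 * z₃))
  + 6 * ((r * (z₁ - z₃) - 1) / 2) * (-(2 : K) * q + t * (z₁ + z₃))
      * (-q + t * z₂ - r * (z₁ + z₃ - 2 * z₂))
  + 6 * ((r * (z₂ - z₃) - 1) / 2) * (-q + t * z₁)
      * (-(2 : K) * q + t * (z₂ + z₃) - r * (2 * z₁ - z₂ - z₃))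
  + 6 * ((1 : K) / 6 * ((r * (z₁ - z₂) - 1) * (r * (z₁ + z₂ - 2 * z₃) - 2)
          + (r * (z₁ - z₃) - 1) * (r * (z₁ + z₃ - 2 * z₂) - 2)))
      * (-(3 : K) * q + t * (z₁ + z₂ + z₃))

/-! The transpositions `(0 1)` and `(1 2)` generate the symmetric group on `Fin 3`, and invariance
of `EC3` under each of them is a polynomial identity once the denominators `2` and `6` are
cleared. When `6 = 0` in `K` every summand of `EC3` vanishes. -/

open Equiv

theorem apply_comp_perm_eq_of_swap_castSucc_succ {α β : Type*} {n : ℕ}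
    (f : (Fin (n + 1) → α) → β)
    (hf : ∀ (i : Fin n) (z : Fin (n + 1) → α), f (z ∘ swap i.castSucc i.succ) = f z)
    (π : Perm (Fin (n + 1))) (z : Fin (n + 1) → α) : f (z ∘ π) = f z := by
  have hπ : π ∈ Submonoid.closure (Set.range fun i : Fin n ↦ swap i.castSucc i.succ) := by
    rw [Perm.mclosure_swap_castSucc_succ]; trivial
  induction hπ using Submonoid.closure_induction generalizing z with
  | mem σ hσ => obtain ⟨i, rfl⟩ := hσ; exact hf i z
  | one => rfl
  | mul σ τ _ _ hσ hτ => rw [Perm.coe_mul, ← Function.comp_assoc, hτ, hσ]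

section EC3

variable {K : Type*} [Field K] (q t r a b c : K)

theorem EC3_eq_zero_of_six_eq_zero (h6 : (6 : K) = 0) : EC3 q t r a b c = 0 := by
  simp [EC3, h6]

theorem EC3_swap_left : EC3 q t r b a c = EC3 q t r a b c := by
  by_cases h6 : (6 : K) = 0
  · simp only [EC3_eq_zero_of_six_eq_zero _ _ _ _ _ _ h6]
  have h2 : (2 : K) ≠ 0 := fun h2 ↦ h6 (by linear_combination 3 * h2)
  unfold EC3; field_simp; ring

theorem EC3_swap_right : EC3 q t r a c b = EC3 q t r a b c := by
  by_cases h6 : (6 : K) = 0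
  · simp only [EC3_eq_zero_of_six_eq_zero _ _ _ _ _ _ h6]
  have h2 : (2 : K) ≠ 0 := fun h2 ↦ h6 (by linear_combination 3 * h2)
  unfold EC3; field_simp; ring

end EC3

theorem EC_three_symmetric_general (K : Type*) [Field K] (q t r : K)
    (z : Fin 3 → K) (π : Equiv.Perm (Fin 3)) :
    EC3 q t r (z (π 0)) (z (π 1)) (z (π 2)) = EC3 q t r (z 0) (z 1) (z 2) := by
  refine apply_comp_perm_eq_of_swap_castSucc_succ
    (fun z : Fin 3 → K ↦ EC3 q t r (z 0) (z 1) (z 2)) (fun i z ↦ ?_) π z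
  fin_cases i
  · exact EC3_swap_left ..
  · exact EC3_swap_right ..

/-- `EC₃` is symmetric in `z₁, z₂, z₃`: it is invariant under every permutation. -/
theorem EC_three_symmetric (K : Type*) [Field K] [CharZero K] (q t r : K)
    (z : Fin 3 → K) (π : Equiv.Perm (Fin 3)) :
    EC3 q t r (z (π 0)) (z (π 1)) (z (π 2)) = EC3 q t r (z 0) (z 1) (z 2) :=
  EC_three_symmetric_general K q t r z π
end

section
/- For any integers A, B, any positive integer n, and the function f(y) = (1 + y^A)^B on y > 0 (with A, B possibly negative), the n-th derivative satisfies f^{(n)}(y) = n!·Σ_{i=1}^n Σ_{j_1+⋯+j_i = n, j_k ≥ 1} C(B, i)·(1 + y^A)^{B−i}·C(A, j_1)⋯C(A, j_i)·y^{Ai−n}, where C(x, k) = x(x−1)⋯(x−k+1)/k! is the generalized binomial coefficient. -/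
/-!
Write `g(x) = (1 + x)^A - 1 = Σ_{j ≥ 1} C(A, j) xʲ`, so that the inner sum of the
formula, `c(i, n) = Σ_{j₁+⋯+jᵢ=n, jₖ≥1} C(A,j₁)⋯C(A,jᵢ)`, is the coefficient of `xⁿ` in
`g(x)ⁱ`.
The differential equation `(1 + x) g' = A (1 + g)` gives `(1 + x) (gⁱ)' = i A (gⁱ + gⁱ⁻¹)`,
i.e. the recursion `(n + 1) c(i, n + 1) = (A i - n) c(i, n) + i A c(i - 1, n)`.
On the analytic side, `C(B,i) (1+y^A)^(B-i) y^(Ai-n)` differentiates into the two terms of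
the same shape indexed by `(i + 1, n + 1)` and `(i, n + 1)`, with `(B - i) C(B,i) = (i+1) C(B,i+1)`
providing the first coefficient; the recursion then closes the induction on `n`.
-/

open PowerSeries Finset

theorem Ring.choose_mul_sub {R : Type*} [CommRing R] [BinomialRing R] (r : R) (k : ℕ) :
    Ring.choose r k * (r - k) = (k + 1) * Ring.choose r (k + 1) := by
  have h := Ring.choose_smul_choose r (Nat.le_succ k)
  simp only [Nat.succ_eq_add_one, Nat.choose_succ_self_right, Nat.add_sub_cancel_left,
    Ring.choose_one_right] at h
  rw [← h, nsmul_eq_mul]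
  push_cast
  ring

namespace PowerSeries

variable {R : Type*}

theorem coeff_pow_eq_sum_piAntidiag [CommSemiring R] (f : R⟦X⟧) (i n : ℕ) :
    coeff n (f ^ i) = ∑ j ∈ piAntidiag (univ : Finset (Fin i)) n, ∏ k, coeff (j k) f := by
  rw [← Fin.prod_const, coeff_prod]
  simp only [finsuppAntidiag, sum_map]
  exact sum_attach _ (fun j : Fin i → ℕ => ∏ k, coeff (j k) f)

theorem coeff_pow_eq_sum_compositions [CommSemiring R] {f : R⟦X⟧} (hf : constantCoeff f = 0)
    (i n : ℕ) :
    coeff n (f ^ i) = ∑ j ∈ (Fintype.piFinset fun _ : Fin i => Icc 1 n).filter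
      (fun j => ∑ k, j k = n), ∏ k, coeff (j k) f := by
  rw [coeff_pow_eq_sum_piAntidiag]
  refine (sum_subset (fun j hj => ?_) fun j hj hjc => ?_).symm
  · simp_all
  · have hsum : ∑ k, j k = n := by simpa using hj
    obtain ⟨k, hk⟩ : ∃ k, j k ∉ Icc 1 n := by
      by_contra! h
      exact hjc (by simp [Fintype.mem_piFinset, h, hsum])
    have hle : j k ≤ n := hsum ▸ single_le_sum (fun _ _ => Nat.zero_le _) (mem_univ k)
    have hk0 : j k = 0 := by
      simp only [mem_Icc] at hk
      omega
    exact prod_eq_zero (mem_univ k) (by rw [hk0, coeff_zero_eq_constantCoeff_apply, hf])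

theorem coeff_X_mul_derivative [CommSemiring R] (f : R⟦X⟧) (n : ℕ) :
    coeff n (X * d⁄dX R f) = n * coeff n f := by
  cases n with
  | zero => simp
  | succ n =>
    rw [coeff_succ_X_mul, coeff_derivative, mul_comm]
    push_cast
    rfl

variable [CommRing R] [BinomialRing R]

theorem one_add_X_mul_derivative_binomialSeries (r : R) :
    (1 + X) * d⁄dX R (binomialSeries R r) = r • binomialSeries R r := by
  ext n
  rw [add_mul, one_mul, map_add, coeff_X_mul_derivative, coeff_derivative, coeff_smul]
  simp only [binomialSeries_coeff, smul_eq_mul, mul_one]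
  linear_combination -Ring.choose_mul_sub r n

theorem one_add_X_mul_derivative_pow_binomialSeries_sub_one (r : R) (i : ℕ) :
    (1 + X) * d⁄dX R ((binomialSeries R r - 1) ^ i)
      = (i * r) • ((binomialSeries R r - 1) ^ i + (binomialSeries R r - 1) ^ (i - 1)) := by
  cases i with
  | zero => simp
  | succ i =>
    rw [derivative_pow, map_sub, derivative_one, sub_zero, Nat.add_sub_cancel,
      mul_left_comm, one_add_X_mul_derivative_binomialSeries]
    simp only [smul_eq_C_mul, map_mul, map_natCast]
    ring

end PowerSeries

noncomputable def compositionCoeff (A : ℤ) (i n : ℕ) : ℤ :=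
  coeff n ((binomialSeries ℤ A - 1) ^ i)

theorem compositionCoeff_eq_sum (A : ℤ) (i n : ℕ) :
    compositionCoeff A i n = ∑ j ∈ (Fintype.piFinset fun _ : Fin i => Icc 1 n).filter
      (fun j => ∑ k, j k = n), ∏ k, Ring.choose A (j k) := by
  rw [compositionCoeff, coeff_pow_eq_sum_compositions (by simp)]
  refine sum_congr rfl fun j hj => prod_congr rfl fun k _ => ?_
  have hk : j k ≠ 0 := by
    have := (Fintype.mem_piFinset.mp (mem_filter.mp hj).1) k
    simp only [mem_Icc] at this
    omega
  simp [coeff_one, hk]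

theorem compositionCoeff_zero_zero (A : ℤ) : compositionCoeff A 0 0 = 1 := by
  simp [compositionCoeff]

theorem compositionCoeff_zero_left {A : ℤ} {n : ℕ} (hn : n ≠ 0) :
    compositionCoeff A 0 n = 0 := by
  simp [compositionCoeff, coeff_one, hn]

theorem compositionCoeff_of_lt {A : ℤ} {i n : ℕ} (h : n < i) : compositionCoeff A i n = 0 := by
  have hX : X ∣ binomialSeries ℤ A - 1 := by simp [X_dvd_iff]
  exact X_pow_dvd_iff.mp (pow_dvd_pow_of_dvd hX i) n h

theorem succ_mul_compositionCoeff_succ (A : ℤ) (i n : ℕ) :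
    (n + 1) * compositionCoeff A i (n + 1)
      = (A * i - n) * compositionCoeff A i n + i * A * compositionCoeff A (i - 1) n := by
  have h := congrArg (coeff n) (one_add_X_mul_derivative_pow_binomialSeries_sub_one A i)
  rw [add_mul, one_mul, map_add, coeff_X_mul_derivative, coeff_derivative, coeff_smul,
    map_add] at h
  simp only [compositionCoeff, smul_eq_mul] at h ⊢
  linear_combination h

noncomputable def oneAddZPowTerm (A B : ℤ) (i m : ℕ) (y : ℝ) : ℝ :=
  ((Ring.choose B i : ℤ) : ℝ) * (1 + y ^ A) ^ (B - i) * y ^ (A * i - m)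

theorem hasDerivAt_oneAddZPowTerm (A B : ℤ) (i m : ℕ) {y : ℝ} (hy : 0 < y) :
    HasDerivAt (oneAddZPowTerm A B i m)
      (A * (i + 1) * oneAddZPowTerm A B (i + 1) (m + 1) y
        + (A * i - m) * oneAddZPowTerm A B i (m + 1) y) y := by
  have hbase : 1 + y ^ A ≠ 0 := (add_pos one_pos (zpow_pos hy A)).ne'
  have hin := (hasDerivAt_zpow A y (.inl hy.ne')).const_add 1
  have hout := hasDerivAt_zpow (B - i) (1 + y ^ A) (.inl hbase)
  have hmon := hasDerivAt_zpow (A * i - m) y (.inl hy.ne')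
  refine (((hout.comp y hin).const_mul ((Ring.choose B i : ℤ) : ℝ)).mul hmon).congr_deriv ?_
  have hchoose : ((Ring.choose B i : ℤ) : ℝ) * (B - i)
      = (i + 1) * ((Ring.choose B (i + 1) : ℤ) : ℝ) := by
    exact_mod_cast Ring.choose_mul_sub B i
  have hpow : y ^ (A - 1) * y ^ (A * i - m) = y ^ (A * (i + 1 : ℕ) - (m + 1 : ℕ)) := by
    rw [← zpow_add₀ hy.ne']
    push_cast
    ring_nf
  simp only [oneAddZPowTerm, Function.comp_apply]
  push_cast at hpow ⊢
  rw [sub_sub, sub_sub, ← hpow]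
  linear_combination
    ((A : ℝ) * (1 + y ^ A) ^ (B - (i + 1)) * y ^ (A - 1) * y ^ (A * i - m)) * hchoose

theorem hasDerivAt_sum_compositionCoeff_mul_oneAddZPowTerm (A B : ℤ) (n : ℕ) {y : ℝ}
    (hy : 0 < y) :
    HasDerivAt
      (fun y => ∑ i ∈ range (n + 1), (compositionCoeff A i n : ℝ) * oneAddZPowTerm A B i n y)
      ((n + 1) * ∑ i ∈ range (n + 2),
        (compositionCoeff A i (n + 1) : ℝ) * oneAddZPowTerm A B i (n + 1) y) y := by
  refine (HasDerivAt.fun_sum fun i _ =>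
    (hasDerivAt_oneAddZPowTerm A B i n hy).const_mul _).congr_deriv ?_
  have hrec (i : ℕ) : (n + 1) * (compositionCoeff A i (n + 1) : ℝ)
      = (A * i - n) * compositionCoeff A i n + i * A * compositionCoeff A (i - 1) n := by
    exact_mod_cast succ_mul_compositionCoeff_succ A i n
  simp only [mul_sum, ← mul_assoc, hrec, add_mul, sum_add_distrib]
  rw [sum_range_succ _ (n + 1), sum_range_succ' _ (n + 1)]
  simp only [compositionCoeff_of_lt (Nat.lt_succ_self n), Int.cast_zero, mul_zero, zero_mul,
    add_zero, Nat.cast_zero, Nat.add_sub_cancel, Nat.cast_add, Nat.cast_one, ← sum_add_distrib]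
  exact sum_congr rfl fun i _ => by ring

theorem iteratedDeriv_one_add_zpow_pow_eq_sum_range (A B : ℤ) (n : ℕ) {y : ℝ} (hy : 0 < y) :
    iteratedDeriv n (fun y : ℝ => (1 + y ^ A) ^ B) y
      = n.factorial * ∑ i ∈ range (n + 1),
          (compositionCoeff A i n : ℝ) * oneAddZPowTerm A B i n y := by
  induction n generalizing y with
  | zero => simp [oneAddZPowTerm, compositionCoeff_zero_zero]
  | succ n ih =>
    have hloc : iteratedDeriv n (fun y : ℝ => (1 + y ^ A) ^ B) =ᶠ[nhds y] fun z =>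
        n.factorial * ∑ i ∈ range (n + 1),
          (compositionCoeff A i n : ℝ) * oneAddZPowTerm A B i n z := by
      filter_upwards [Ioi_mem_nhds hy] with z hz using ih hz
    rw [iteratedDeriv_succ, hloc.deriv_eq,
      ((hasDerivAt_sum_compositionCoeff_mul_oneAddZPowTerm A B n hy).const_mul _).deriv,
      Nat.factorial_succ]
    push_cast
    ring

/-- Lemma 2.6: for integers `A, B` and a positive integer `n`, the `n`-th derivative of
`y ↦ (1 + y^A)^B` at any `y > 0` equals
`n! Σ_{i=1}^n Σ_{j₁+⋯+jᵢ=n, jₖ≥1} C(B,i) (1+y^A)^(B-i) C(A,j₁)⋯C(A,jᵢ) y^(Ai-n)`,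
where `C(x, k)` is the generalized binomial coefficient (`Ring.choose` on `ℤ`). -/
theorem iteratedDeriv_one_add_zpow_pow (A B : ℤ) (n : ℕ) (hn : 0 < n) (y : ℝ) (hy : 0 < y) :
    iteratedDeriv n (fun y : ℝ => (1 + y ^ A) ^ B) y
    = (n.factorial : ℝ) * ∑ i ∈ Finset.Icc 1 n,
        ∑ j ∈ (Fintype.piFinset fun _ : Fin i => Finset.Icc 1 n).filter
            (fun j => ∑ k, j k = n),
          ((Ring.choose B i : ℤ) : ℝ) * (1 + y ^ A) ^ (B - (i : ℤ))
            * (∏ k, ((Ring.choose A (j k) : ℤ) : ℝ)) * y ^ (A * (i : ℤ) - (n : ℤ)) := by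
  rw [iteratedDeriv_one_add_zpow_pow_eq_sum_range A B n hy, range_eq_Ico,
    sum_eq_sum_Ico_succ_bot (by positivity), zero_add, Ico_add_one_right_eq_Icc,
    compositionCoeff_zero_left hn.ne', Int.cast_zero, zero_mul, zero_add]
  refine congrArg _ (sum_congr rfl fun i _ => ?_)
  rw [compositionCoeff_eq_sum, oneAddZPowTerm, Int.cast_sum, sum_mul]
  refine sum_congr rfl fun j _ => ?_
  push_cast
  ring
end

section
/- For e_2 = 1 and 0 ≤ e_1 < c, the two expressions for the Euler characteristic agree: Σ_{t≥0} C(a_{n-3}, t)·C(a_{n-2} − c·t, 1)·C(−a_{n-3} + c, e_1 − t) = C(c, e_1)·C(a_{n-2}, 1) + Σ_{i=1}^{1} C(a_{n-3}, 1)·C(c − 1, e_1 − 1)·C(−c, 1)·C(a_{n-2}, 0), i.e., both sides equal C(c, e_1)·a_{n-2} − c·a_{n-3}·C(c−1, e_1−1). -/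
/-! Both sides reduce to Chu–Vandermonde. Expanding `C(a_{n-2} - c t, 1) = a_{n-2} - c t`, the sum
splits into `a_{n-2} Σ_t C(A, t) C(c - A, e₁ - t)` and `c Σ_t t C(A, t) C(c - A, e₁ - t)` with
`A = a_{n-3}`. The first is `C(c, e₁)`; absorbing `t C(A, t) = A C(A - 1, t - 1)` turns the second
into `A C(c - 1, e₁ - 1)`. -/

/-- Generalized binomial coefficient `C(x, k)` for integers `x, k`,
equal to `x(x-1)⋯(x-k+1)/k!` for `k ≥ 0` and `0` for `k < 0`. -/
def gchZ (x k : ℤ) : ℤ := if k < 0 then 0 else Ring.choose x k.toNat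

open Finset

namespace Ring

variable {R : Type*} [CommRing R] [BinomialRing R]

theorem sum_range_choose_mul_choose (x y : R) (k : ℕ) :
    ∑ t ∈ range (k + 1), choose x t * choose y (k - t) = choose (x + y) k := by
  rw [add_choose_eq k (Commute.all x y), Nat.sum_antidiagonal_eq_sum_range_succ_mk]

theorem succ_mul_choose_succ (x : R) (s : ℕ) :
    ((s + 1 : ℕ) : R) * choose x (s + 1) = x * choose (x - 1) s := by
  simpa [choose_one_right, nsmul_eq_mul] using choose_smul_choose x (n := s + 1) (k := 1) (by omega)

theorem sum_range_mul_choose_mul_choose (x y : R) (k : ℕ) :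
    ∑ t ∈ range (k + 2), (t : R) * choose x t * choose y (k + 1 - t)
      = x * choose (x + y - 1) k := by
  rw [sum_range_succ', Nat.cast_zero, zero_mul, zero_mul, add_zero]
  calc ∑ s ∈ range (k + 1), ((s + 1 : ℕ) : R) * choose x (s + 1) * choose y (k + 1 - (s + 1))
      = ∑ s ∈ range (k + 1), x * (choose (x - 1) s * choose y (k - s)) := by
        refine sum_congr rfl fun s _ => ?_
        rw [Nat.add_sub_add_right, succ_mul_choose_succ, mul_assoc]
    _ = x * choose (x + y - 1) k := by
        rw [← mul_sum, sum_range_choose_mul_choose, sub_add_eq_add_sub]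

end Ring

theorem gchZ_natCast (x : ℤ) (t : ℕ) : gchZ x t = Ring.choose x t := by
  simp [gchZ]

theorem gchZ_zero (x : ℤ) : gchZ x 0 = 1 :=
  gchZ_natCast x 0 ▸ Ring.choose_zero_right x

theorem gchZ_one (x : ℤ) : gchZ x 1 = x :=
  gchZ_natCast x 1 ▸ Ring.choose_one_right x

theorem gchZ_neg_one (x : ℤ) : gchZ x (-1) = 0 := by
  simp [gchZ]

theorem sum_range_gchZ_mul_gchZ_sub_mul_mul_gchZ (A B c : ℤ) (e : ℕ) :
    ∑ t ∈ range (e + 1), gchZ A t * gchZ (B - c * t) 1 * gchZ (-A + c) (e - t)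
      = gchZ c e * B - c * A * gchZ (c - 1) (e - 1) := by
  have hterm : ∀ t ∈ range (e + 1),
      gchZ A t * gchZ (B - c * t) 1 * gchZ (-A + c) (e - t)
        = B * (Ring.choose A t * Ring.choose (-A + c) (e - t))
          - c * ((t : ℤ) * Ring.choose A t * Ring.choose (-A + c) (e - t)) := by
    intro t ht
    have hte : t ≤ e := Nat.lt_succ_iff.mp (mem_range.mp ht)
    rw [← Nat.cast_sub hte, gchZ_natCast, gchZ_natCast, gchZ_one]
    ring
  rw [sum_congr rfl hterm, sum_sub_distrib, ← mul_sum, ← mul_sum,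
    Ring.sum_range_choose_mul_choose, add_neg_cancel_left, gchZ_natCast]
  cases e with
  | zero => simp [gchZ_neg_one]
  | succ d =>
    rw [Ring.sum_range_mul_choose_mul_choose, add_neg_cancel_left, Nat.cast_succ,
      add_sub_cancel_right, gchZ_natCast]
    ring

theorem identity_two_seven_e2_one_general (c : ℤ) (a : ℕ → ℤ)
    (n : ℕ) (e₁ : ℤ) (he₁ : 0 ≤ e₁) :
    (∑ t ∈ Finset.range (e₁.toNat + 1),
        gchZ (a (n - 3)) t * gchZ (a (n - 2) - c * t) 1 * gchZ (-a (n - 3) + c) (e₁ - t)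
      = gchZ c e₁ * a (n - 2) - c * a (n - 3) * gchZ (c - 1) (e₁ - 1))
    ∧ gchZ c e₁ * gchZ (a (n - 2)) 1
        + gchZ (a (n - 3)) 1 * gchZ (c - 1) (e₁ - 1) * gchZ (-c) 1 * gchZ (a (n - 2)) 0
      = gchZ c e₁ * a (n - 2) - c * a (n - 3) * gchZ (c - 1) (e₁ - 1) := by
  lift e₁ to ℕ using he₁
  constructor
  · rw [Int.toNat_natCast]
    exact sum_range_gchZ_mul_gchZ_sub_mul_mul_gchZ _ _ _ _
  · rw [gchZ_one, gchZ_one, gchZ_one, gchZ_zero]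
    ring

/-- The case `e₂ = 1` of identity (2.7): for `c ≥ 2`, `n ≥ 4`, `0 ≤ e₁ < c`,
`Σ_{t≥0} C(a_{n-3}, t) C(a_{n-2} - ct, 1) C(-a_{n-3}+c, e₁-t)` and
`C(c, e₁) C(a_{n-2}, 1) + C(a_{n-3}, 1) C(c-1, e₁-1) C(-c, 1) C(a_{n-2}, 0)`
both equal `C(c, e₁) a_{n-2} - c a_{n-3} C(c-1, e₁-1)`. -/
theorem identity_two_seven_e2_one (c : ℤ) (hc : 2 ≤ c) (a : ℕ → ℤ)
    (h1 : a 1 = 0) (h2 : a 2 = 1)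
    (hrec : ∀ m, 3 ≤ m → a m = c * a (m - 1) - a (m - 2))
    (n : ℕ) (hn : 4 ≤ n) (e₁ : ℤ) (he₁ : 0 ≤ e₁) (he₁c : e₁ < c) :
    (∑ t ∈ Finset.range (e₁.toNat + 1),
        gchZ (a (n - 3)) t * gchZ (a (n - 2) - c * t) 1 * gchZ (-a (n - 3) + c) (e₁ - t)
      = gchZ c e₁ * a (n - 2) - c * a (n - 3) * gchZ (c - 1) (e₁ - 1))
    ∧ gchZ c e₁ * gchZ (a (n - 2)) 1
        + gchZ (a (n - 3)) 1 * gchZ (c - 1) (e₁ - 1) * gchZ (-c) 1 * gchZ (a (n - 2)) 0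
      = gchZ c e₁ * a (n - 2) - c * a (n - 3) * gchZ (c - 1) (e₁ - 1) :=
  identity_two_seven_e2_one_general c a n e₁ he₁
end
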